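/- arXiv:2201.02298 — 2 statements merged into one kernel-verified Lean document; each statement's English description precedes it below -/
import Mathlib

section
/- Let λ ∈ ℝ^n and ĝ(u) = ‖u⊗u⊗u − diag₃(λ)‖_F². If û = λ_k^{1/3} e_k for some index k with λ_k > 0, then û is a critical point of ĝ and the Hessian at û equals 6 λ_k^{4/3} I + 12 λ_k^{4/3} e_k e_kᵀ, which is positive definite; hence û is a strict local minimum of ĝ. -/
noncomputable def ghat {n : ℕ} (lam : Fin n → ℝ) (u : EuclideanSpace ℝ (Fin n)) : ℝ :=
  ∑ i, ∑ j, ∑ k, (u i * u j * u k - if i = j ∧ j = k then lam i else 0) ^ 2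

lemma ghat_eq {n : ℕ} (lam : Fin n → ℝ) (u : EuclideanSpace ℝ (Fin n)) :
    ghat lam u = (∑ i, u i ^ 2) ^ 3 - 2 * ∑ i, lam i * u i ^ 3 + ∑ i, lam i ^ 2 := by
  have key : ∀ i j k : Fin n,
      (u i * u j * u k - if i = j ∧ j = k then lam i else 0) ^ 2 =
      u i ^2 * u j ^2 * u k ^2 - 2 * (if i = j ∧ j = k then lam i * u i ^ 3 else 0)
        + (if i = j ∧ j = k then lam i ^ 2 else 0) := by
    intro i j k
    split_ifs with h
    · obtain ⟨h1, h2⟩ := h; subst h1; subst h2; ring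
    · ring
  have e1 : (∑ i, ∑ j, ∑ k, u i ^2 * u j ^2 * u k ^2 : ℝ) = (∑ i, u i ^ 2) ^ 3 := by
    rw [pow_succ, pow_two, Finset.sum_mul_sum, Finset.sum_mul_sum]
    refine Finset.sum_congr rfl fun i _ => ?_
    simp only [Finset.sum_mul]
    rw [Finset.sum_comm]
  have e2 : (∑ i : Fin n, ∑ j, ∑ k, if i = j ∧ j = k then lam i * u i ^ 3 else 0 : ℝ)
      = ∑ i, lam i * u i ^ 3 := by
    refine Finset.sum_congr rfl fun i _ => ?_
    simp [ite_and, Finset.sum_ite_eq]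
  have e3 : (∑ i : Fin n, ∑ j, ∑ k, if i = j ∧ j = k then lam i ^ 2 else 0 : ℝ)
      = ∑ i, lam i ^ 2 := by
    refine Finset.sum_congr rfl fun i _ => ?_
    simp [ite_and, Finset.sum_ite_eq]
  calc ghat lam u
      = (∑ i, ∑ j, ∑ k, u i ^2 * u j ^2 * u k ^2)
        - 2 * (∑ i : Fin n, ∑ j, ∑ k, if i = j ∧ j = k then lam i * u i ^ 3 else 0)
        + (∑ i : Fin n, ∑ j, ∑ k, if i = j ∧ j = k then lam i ^ 2 else 0) := by
        simp only [ghat, key, Finset.sum_add_distrib, Finset.sum_sub_distrib, ← Finset.mul_sum]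
    _ = _ := by rw [e1, e2, e3]

noncomputable def gderiv {n : ℕ} (lam : Fin n → ℝ) (u : EuclideanSpace ℝ (Fin n)) :
    EuclideanSpace ℝ (Fin n) →L[ℝ] ℝ :=
  ∑ i, (6 * (∑ j, u j ^ 2) ^ 2 * u i - 6 * lam i * u i ^ 2) • EuclideanSpace.proj i

lemma gderiv_apply {n : ℕ} (lam : Fin n → ℝ) (u v : EuclideanSpace ℝ (Fin n)) :
    gderiv lam u v = ∑ i, (6 * (∑ j, u j ^ 2) ^ 2 * u i - 6 * lam i * u i ^ 2) * v i := by
  simp [gderiv]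

lemma hasFDerivAt_ghat {n : ℕ} (lam : Fin n → ℝ) (u : EuclideanSpace ℝ (Fin n)) :
    HasFDerivAt (ghat lam) (gderiv lam u) u := by
  have hfun : ghat lam = fun u : EuclideanSpace ℝ (Fin n) =>
      (∑ i, u i ^ 2) ^ 3 - 2 * ∑ i, lam i * u i ^ 3 + ∑ i, lam i ^ 2 := funext (ghat_eq lam)
  rw [hfun]
  have hp : ∀ i : Fin n, HasFDerivAt (fun u : EuclideanSpace ℝ (Fin n) => u i)
      (EuclideanSpace.proj i : EuclideanSpace ℝ (Fin n) →L[ℝ] ℝ) u :=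
    fun i => (EuclideanSpace.proj (𝕜 := ℝ) i).hasFDerivAt (x := u)
  have hφ : HasFDerivAt (fun u : EuclideanSpace ℝ (Fin n) => ∑ j, u j ^ 2)
      (∑ j, (2 * u j) • (EuclideanSpace.proj j : EuclideanSpace ℝ (Fin n) →L[ℝ] ℝ)) u := by
    apply HasFDerivAt.fun_sum
    intro j _
    simpa [pow_two, two_mul, add_smul] using (hp j).fun_mul (hp j)
  have hψ : HasFDerivAt (fun u : EuclideanSpace ℝ (Fin n) => ∑ i, lam i * u i ^ 3)
      (∑ i, (3 * lam i * u i ^ 2) • (EuclideanSpace.proj i : EuclideanSpace ℝ (Fin n) →L[ℝ] ℝ)) u := by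
    apply HasFDerivAt.fun_sum
    intro i _
    have h3 : HasFDerivAt (fun u : EuclideanSpace ℝ (Fin n) => u i ^ 3)
        ((3 * u i ^ 2) • (EuclideanSpace.proj i : EuclideanSpace ℝ (Fin n) →L[ℝ] ℝ)) u := by
      have := ((hp i).fun_mul (hp i)).fun_mul (hp i)
      refine (this.congr_fderiv ?_).congr_of_eventuallyEq (Filter.EventuallyEq.of_eq ?_)
      rotate_left
      · funext w; ring
      · ext w; simp; ring
    simpa [smul_smul, mul_assoc, mul_comm, mul_left_comm] using h3.const_mul (lam i)
  have hD := (((hφ.fun_mul hφ).fun_mul hφ).fun_sub (hψ.const_mul (2:ℝ))).add_const (∑ i, lam i ^ 2)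
  refine (hD.congr_fderiv ?_).congr_of_eventuallyEq (Filter.EventuallyEq.of_eq ?_)
  rotate_left
  · funext w; ring
  · ext w
    simp only [gderiv, ContinuousLinearMap.sum_apply, ContinuousLinearMap.smul_apply,
      PiLp.proj_apply, smul_eq_mul, ContinuousLinearMap.add_apply,
      ContinuousLinearMap.sub_apply]
    have L : ∑ i, (6 * (∑ j, u j ^ 2) ^ 2 * u i - 6 * lam i * u i ^ 2) * w i =
        6 * (∑ j, u j ^ 2) ^ 2 * (∑ i, u i * w i) - 6 * (∑ i, lam i * u i ^ 2 * w i) := by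
      rw [Finset.mul_sum, Finset.mul_sum, ← Finset.sum_sub_distrib]
      exact Finset.sum_congr rfl fun i _ => by ring
    have R1 : ∑ i, (2 * u i) * w i = 2 * ∑ i, u i * w i := by
      rw [Finset.mul_sum]
      exact Finset.sum_congr rfl fun i _ => by ring
    have R2 : ∑ i, (3 * lam i * u i ^ 2) * w i = 3 * ∑ i, lam i * u i ^ 2 * w i := by
      rw [Finset.mul_sum]
      exact Finset.sum_congr rfl fun i _ => by ring
    rw [L, R1, R2]
    ring

noncomputable def gderiv2 {n : ℕ} (lam : Fin n → ℝ) (u : EuclideanSpace ℝ (Fin n)) :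
    EuclideanSpace ℝ (Fin n) →L[ℝ] EuclideanSpace ℝ (Fin n) →L[ℝ] ℝ :=
  ∑ i, (ContinuousLinearMap.smulRight
    ((∑ j, (24 * (∑ l, u l ^ 2) * u i * u j) • (EuclideanSpace.proj j : EuclideanSpace ℝ (Fin n) →L[ℝ] ℝ)) +
      (6 * (∑ l, u l ^ 2) ^ 2 - 12 * lam i * u i) • (EuclideanSpace.proj i : EuclideanSpace ℝ (Fin n) →L[ℝ] ℝ))
    (EuclideanSpace.proj i : EuclideanSpace ℝ (Fin n) →L[ℝ] ℝ))

lemma gderiv2_apply {n : ℕ} (lam : Fin n → ℝ) (u v w : EuclideanSpace ℝ (Fin n)) :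
    gderiv2 lam u v w = ∑ i, ((∑ j, 24 * (∑ l, u l ^ 2) * u i * u j * v j)
      + (6 * (∑ l, u l ^ 2) ^ 2 - 12 * lam i * u i) * v i) * w i := by
  simp [gderiv2, Finset.sum_apply, mul_assoc]

lemma hasFDerivAt_gderiv {n : ℕ} (lam : Fin n → ℝ) (u : EuclideanSpace ℝ (Fin n)) :
    HasFDerivAt (gderiv lam) (gderiv2 lam u) u := by
  have hp : ∀ i : Fin n, HasFDerivAt (fun u : EuclideanSpace ℝ (Fin n) => u i)
      (EuclideanSpace.proj i : EuclideanSpace ℝ (Fin n) →L[ℝ] ℝ) u :=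
    fun i => (EuclideanSpace.proj (𝕜 := ℝ) i).hasFDerivAt (x := u)
  have hφ : HasFDerivAt (fun u : EuclideanSpace ℝ (Fin n) => ∑ j, u j ^ 2)
      (∑ j, (2 * u j) • (EuclideanSpace.proj j : EuclideanSpace ℝ (Fin n) →L[ℝ] ℝ)) u := by
    apply HasFDerivAt.fun_sum
    intro j _
    simpa [pow_two, two_mul, add_smul] using (hp j).fun_mul (hp j)
  have big := HasFDerivAt.fun_sum (fun (i : Fin n) (_ : i ∈ Finset.univ) =>
    (((((hφ.fun_mul hφ).const_mul (6:ℝ)).fun_mul (hp i)).fun_sub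
      (((hp i).fun_mul (hp i)).const_mul (6 * lam i))).smul_const
        (EuclideanSpace.proj i : EuclideanSpace ℝ (Fin n) →L[ℝ] ℝ)))
  refine (big.congr_fderiv ?_).congr_of_eventuallyEq (Filter.EventuallyEq.of_eq ?_)
  rotate_left
  · funext w
    unfold gderiv
    refine Finset.sum_congr rfl fun i _ => ?_
    congr 1
    ring
  · unfold gderiv2
    refine Finset.sum_congr rfl fun i _ => ?_
    ext v w
    simp only [ContinuousLinearMap.smulRight_apply, ContinuousLinearMap.sum_apply,
      ContinuousLinearMap.smul_apply, PiLp.proj_apply, smul_eq_mul,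
      ContinuousLinearMap.add_apply, ContinuousLinearMap.sub_apply]
    congr 1
    have A : ∑ x, (24 * ∑ x : Fin n, u x ^ 2) * u i * u x * v x =
        24 * (∑ x : Fin n, u x ^ 2) * u i * ∑ x, u x * v x := by
      conv_rhs => rw [Finset.mul_sum]
      exact Finset.sum_congr rfl fun x _ => by ring
    have B : ∑ x : Fin n, 2 * u x * v x = 2 * ∑ x, u x * v x := by
      conv_rhs => rw [Finset.mul_sum]
      exact Finset.sum_congr rfl fun x _ => by ring
    rw [A, B]
    ring

set_option maxHeartbeats 1000000 in
/-- If `û = λ_k^{1/3} e_k` with `λ_k > 0`, then `û` is a critical point of `ĝ`,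
the Hessian at `û` is `6 λ_k^{4/3} I + 12 λ_k^{4/3} e_k e_kᵀ`, which is positive
definite, and `û` is a strict local minimum of `ĝ`. -/
theorem ghat_coordinate_point_strict_local_min {n : ℕ} (lam : Fin n → ℝ)
    (k : Fin n) (hk : 0 < lam k)
    (uhat : EuclideanSpace ℝ (Fin n))
    (huhat : uhat = fun i => if i = k then lam k ^ ((1 : ℝ) / 3) else 0)
    (M : Matrix (Fin n) (Fin n) ℝ)
    (hM : M = fun i j =>
      6 * lam k ^ ((4 : ℝ) / 3) * (if i = j then 1 else 0) +
        12 * lam k ^ ((4 : ℝ) / 3) * (if i = k ∧ j = k then 1 else 0)) :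
    HasGradientAt (ghat lam) 0 uhat ∧
    (∀ v w : EuclideanSpace ℝ (Fin n),
        iteratedFDeriv ℝ 2 (ghat lam) uhat ![v, w] = ∑ i, ∑ j, v i * M i j * w j) ∧
    M.PosDef ∧
    (∀ᶠ v in nhdsWithin uhat {uhat}ᶜ, ghat lam uhat < ghat lam v) := by
  set c : ℝ := lam k ^ ((1 : ℝ) / 3) with hcdef
  have hc : 0 < c := Real.rpow_pos_of_pos hk _
  have hc3 : c ^ 3 = lam k := by
    rw [hcdef, ← Real.rpow_natCast (lam k ^ ((1:ℝ)/3)) 3, ← Real.rpow_mul hk.le]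
    norm_num
  have hc4 : lam k ^ ((4:ℝ)/3) = c ^ 4 := by
    rw [hcdef, ← Real.rpow_natCast (lam k ^ ((1:ℝ)/3)) 4, ← Real.rpow_mul hk.le]
    norm_num
  clear_value c
  have hu : ∀ i, uhat i = if i = k then c else 0 := fun i => by rw [huhat]
  have hSu : ∑ j, uhat j ^ 2 = c ^ 2 := by
    simp [hu, ite_pow, Finset.sum_ite_eq']
  have hSu3 : ∑ i, lam i * uhat i ^ 3 = c ^ 6 := by
    have : ∀ i, lam i * uhat i ^ 3 = if i = k then lam k * c ^ 3 else 0 := by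
      intro i
      rcases eq_or_ne i k with h | h <;> simp [hu, h]
    rw [Finset.sum_congr rfl fun i _ => this i]
    rw [Finset.sum_ite_eq']
    simp [← hc3]
    ring
  have hg0 : gderiv lam uhat = 0 := by
    ext w
    rw [gderiv_apply, hSu]
    simp only [ContinuousLinearMap.zero_apply]
    refine Finset.sum_eq_zero fun i _ => ?_
    rcases eq_or_ne i k with h | h
    · subst h
      rw [hu i, if_pos rfl, ← hc3]
      ring_nf
    · rw [hu i, if_neg h]
      ring
  refine ⟨?_, ?_, ?_, ?_⟩
  · rw [hasGradientAt_iff_hasFDerivAt, map_zero]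
    have := hasFDerivAt_ghat lam uhat
    rwa [hg0] at this
  · intro v w
    have hfd : fderiv ℝ (ghat lam) = gderiv lam :=
      funext fun u => (hasFDerivAt_ghat lam u).fderiv
    rw [iteratedFDeriv_two_apply, hfd, (hasFDerivAt_gderiv lam uhat).fderiv]
    show gderiv2 lam uhat v w = _
    rw [gderiv2_apply, hSu, hM]
    refine Finset.sum_congr rfl fun i _ => ?_
    have hL : ∑ j, 24 * c ^ 2 * uhat i * uhat j * v j = 24 * c ^ 2 * uhat i * c * v k := by
      have hj : ∀ j, 24 * c ^ 2 * uhat i * uhat j * v j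
          = if j = k then 24 * c ^ 2 * uhat i * c * v j else 0 := by
        intro j
        rcases eq_or_ne j k with h | h <;> simp [hu, h]
      rw [Finset.sum_congr rfl fun j _ => hj j, Finset.sum_ite_eq']
      simp
    have hR : ∑ j, v i * (6 * lam k ^ ((4:ℝ)/3) * (if i = j then (1:ℝ) else 0)
          + 12 * lam k ^ ((4:ℝ)/3) * (if i = k ∧ j = k then 1 else 0)) * w j
        = 6 * c ^ 4 * v i * w i + (if i = k then 12 * c ^ 4 * v i * w k else 0) := by
      have hj : ∀ j, v i * (6 * lam k ^ ((4:ℝ)/3) * (if i = j then (1:ℝ) else 0)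
            + 12 * lam k ^ ((4:ℝ)/3) * (if i = k ∧ j = k then 1 else 0)) * w j
          = (if i = j then 6 * c ^ 4 * v i * w j else 0)
            + (if j = k then (if i = k then 12 * c ^ 4 * v i * w j else 0) else 0) := by
        intro j
        rcases eq_or_ne i j with h1 | h1
        · subst h1
          by_cases h2 : i = k <;> simp [h2, hc4] <;> try ring
          all_goals try tauto
        · by_cases h2 : j = k <;> by_cases h3 : i = k <;>
            simp [h1, h2, h3, hc4] <;> try ring
          all_goals try tauto
      rw [Finset.sum_congr rfl fun j _ => hj j, Finset.sum_add_distrib,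
        Finset.sum_ite_eq, Finset.sum_ite_eq']
      simp
    rw [hR]
    rcases eq_or_ne i k with h | h
    · rw [hL, hu i, if_pos h, if_pos h, h, ← hc3]
      ring
    · rw [hL, hu i, if_neg h, if_neg h]
      ring
  · refine Matrix.posDef_iff_dotProduct_mulVec.mpr ⟨?_, ?_⟩
    · show M.conjTranspose = M
      ext i j
      rw [Matrix.conjTranspose_apply, hM]
      by_cases h1 : i = j
      · subst h1; simp
      · by_cases h2 : i = k <;> by_cases h3 : j = k
        · exact absurd (h2.trans h3.symm) h1
        · simp [h1, Ne.symm h1, h2, h3, Ne.symm h3]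
        · simp [h1, Ne.symm h1, h2, Ne.symm h2, h3]
        · simp [h1, Ne.symm h1, h2, h3, Ne.symm h2, Ne.symm h3]
    · intro x hx
      have hMij : ∀ i j, M i j = 6 * c^4 * (if i = j then (1:ℝ) else 0)
          + 12 * c^4 * (if i = k ∧ j = k then 1 else 0) := by
        intro i j
        rw [hM]
        simp only [hc4]
      have inner_i : ∀ i, x i * M.mulVec x i
          = 6 * c^4 * x i^2 + (if i = k then 12 * c^4 * x k^2 else 0) := by
        intro i
        rw [Matrix.mulVec, dotProduct]
        have hj : ∀ j, M i j * x j
            = (if i = j then 6 * c ^ 4 * x j else 0)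
              + (if j = k then (if i = k then 12 * c ^ 4 * x j else 0) else 0) := by
          intro j
          rw [hMij i j]
          rcases eq_or_ne i j with h1 | h1
          · subst h1
            by_cases h2 : i = k <;> simp [h2] <;> try ring
            all_goals try tauto
          · by_cases h2 : j = k <;> by_cases h3 : i = k <;>
              simp [h1, h2, h3] <;> try ring
            all_goals try tauto
        rw [Finset.sum_congr rfl fun j _ => hj j, Finset.sum_add_distrib,
          Finset.sum_ite_eq, Finset.sum_ite_eq']
        rcases eq_or_ne i k with h | h <;> simp [h] <;> ring
      have hsx : star x = x := by funext i; simp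
      rw [dotProduct, hsx]
      rw [Finset.sum_congr rfl fun i _ => inner_i i, Finset.sum_add_distrib,
        Finset.sum_ite_eq']
      obtain ⟨i0, hi0⟩ : ∃ i, x i ≠ 0 := Function.ne_iff.mp hx
      have hpos : 0 < ∑ i, x i^2 :=
        Finset.sum_pos' (fun j _ => sq_nonneg _) ⟨i0, Finset.mem_univ _, by positivity⟩
      have h6 : ∑ i, 6 * c^4 * x i^2 = 6 * c^4 * ∑ i, x i^2 := by
        rw [Finset.mul_sum]
      rw [h6]
      simp only [Finset.mem_univ, if_true]
      nlinarith [sq_nonneg (x k), pow_pos hc 4]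
  · rw [eventually_nhdsWithin_iff, Metric.eventually_nhds_iff]
    set L : ℝ := ∑ i, |lam i| with hLdef
    have hL0 : 0 ≤ L := Finset.sum_nonneg fun i _ => abs_nonneg _
    have hCC0 : 0 < 12*c^3 + (2*c+1)^3 + 2*L + 1 := by
      have h1 := pow_pos hc 3
      have h2 := pow_pos (by linarith : (0:ℝ) < 2*c+1) 3
      linarith
    refine ⟨min 1 (c^4 / (12*c^3 + (2*c+1)^3 + 2*L + 1)),
      lt_min one_pos (div_pos (pow_pos hc 4) hCC0), fun v hv hvne => ?_⟩
    have hne : v ≠ uhat := by simpa using hvne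
    set d : ℝ := dist v uhat with hd
    have hd0 : 0 < d := dist_pos.mpr hne
    clear_value d
    have hd1 : d < 1 := lt_of_lt_of_le hv (min_le_left _ _)
    have hd2 : d < c^4 / (12*c^3 + (2*c+1)^3 + 2*L + 1) :=
      lt_of_lt_of_le hv (min_le_right _ _)
    have hs : ∑ i, (v i - uhat i)^2 = d^2 := by
      have hde : d = Real.sqrt (∑ i, (v i - uhat i)^2) := by
        rw [hd, EuclideanSpace.dist_eq]
        congr 1
        exact Finset.sum_congr rfl fun i _ => by rw [Real.dist_eq, sq_abs]
      rw [hde, Real.sq_sqrt (Finset.sum_nonneg fun i _ => sq_nonneg _)]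
    have habs : ∀ i, |v i - uhat i| ≤ d := by
      intro i
      have h1 : (v i - uhat i)^2 ≤ d^2 := by
        rw [← hs]
        exact Finset.single_le_sum (f := fun j => (v j - uhat j)^2)
          (fun j _ => sq_nonneg _) (Finset.mem_univ i)
      have h2 := Real.sqrt_le_sqrt h1
      rwa [Real.sqrt_sq_eq_abs, Real.sqrt_sq hd0.le] at h2
    have huk : uhat k = c := by rw [hu k, if_pos rfl]
    have hb : -d ≤ v k - c ∧ v k - c ≤ d := by
      rw [← huk]; exact abs_le.mp (habs k)
    have hTb : |∑ i, lam i * (v i - uhat i)^3| ≤ L * d^3 := by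
      rw [hLdef, Finset.sum_mul]
      calc |∑ i, lam i * (v i - uhat i)^3| ≤ ∑ i, |lam i * (v i - uhat i)^3| :=
          Finset.abs_sum_le_sum_abs _ _
        _ ≤ ∑ i, |lam i| * d^3 := by
            refine Finset.sum_le_sum fun i _ => ?_
            rw [abs_mul, abs_pow]
            exact mul_le_mul_of_nonneg_left
              (pow_le_pow_left₀ (abs_nonneg _) (habs i) 3) (abs_nonneg _)
    have hSv : ∑ i, v i^2 = d^2 + 2*c*(v k) - c^2 := by
      have e : ∀ i, v i^2 = (v i - uhat i)^2 + (2*(uhat i)*(v i) - uhat i^2) :=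
        fun i => by ring
      rw [Finset.sum_congr rfl fun i _ => e i]
      rw [Finset.sum_add_distrib, Finset.sum_sub_distrib, hs]
      have m1 : ∑ i, 2*(uhat i)*(v i) = 2*c*v k := by
        have e1 : ∀ i, 2*(uhat i)*(v i) = if i = k then 2*c*v i else 0 := by
          intro i; rcases eq_or_ne i k with h|h <;> simp [hu, h] <;> try ring
          all_goals tauto
        rw [Finset.sum_congr rfl fun i _ => e1 i, Finset.sum_ite_eq']
        simp
      rw [m1, hSu]
      ring
    have hTv : ∑ i, lam i * v i^3
        = (∑ i, lam i * (v i - uhat i)^3) + 3*c^4*(v k)^2 - 3*c^5*(v k) + c^6 := by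
      have e : ∀ i, lam i * v i^3 = lam i*(v i - uhat i)^3
          + (3*(lam i*uhat i)*(v i)^2 - 3*(lam i*uhat i^2)*(v i) - (-(lam i * uhat i^3))) :=
        fun i => by ring
      rw [Finset.sum_congr rfl fun i _ => e i]
      simp only [Finset.sum_add_distrib, Finset.sum_sub_distrib]
      have m2 : ∑ i, 3*(lam i*uhat i)*(v i)^2 = 3*c^4*(v k)^2 := by
        have e1 : ∀ i, 3*(lam i*uhat i)*(v i)^2 = if i = k then 3*(lam k*c)*(v i)^2 else 0 := by
          intro i; rcases eq_or_ne i k with h|h <;> simp [hu, h] <;> try ring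
          all_goals tauto
        rw [Finset.sum_congr rfl fun i _ => e1 i, Finset.sum_ite_eq',
          if_pos (Finset.mem_univ k), ← hc3]
        ring
      have m3 : ∑ i, 3*(lam i*uhat i^2)*(v i) = 3*c^5*(v k) := by
        have e1 : ∀ i, 3*(lam i*uhat i^2)*(v i) = if i = k then 3*(lam k*c^2)*(v i) else 0 := by
          intro i; rcases eq_or_ne i k with h|h <;> simp [hu, h] <;> try ring
          all_goals tauto
        rw [Finset.sum_congr rfl fun i _ => e1 i, Finset.sum_ite_eq',
          if_pos (Finset.mem_univ k), ← hc3]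
        ring
      have m4 : ∑ i, -(lam i * uhat i^3) = -(c^6) := by
        rw [Finset.sum_neg_distrib, hSu3]
      rw [m2, m3, m4]
      ring
    rw [ghat_eq lam uhat, ghat_eq lam v, hSu, hSu3, hSv, hTv]
    have hbd : 0 ≤ (v k - c) + d := by linarith [hb.1]
    have g1 : 0 ≤ 12*c^3*d^2*((v k - c) + d) :=
      mul_nonneg (mul_nonneg (mul_nonneg (by norm_num) (pow_nonneg hc.le 3))
        (sq_nonneg d)) hbd
    have hX : -((2*c+1)*d) ≤ 2*c*(v k - c) + d^2 := by
      have h2c := mul_nonneg (mul_nonneg (by norm_num : (0:ℝ) ≤ 2) hc.le) hbd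
      nlinarith [sq_nonneg d, hd0.le]
    have g2 : 0 ≤ (2*c*(v k - c) + d^2)^3 + ((2*c+1)*d)^3 := by
      have key : 0 ≤ ((2*c*(v k - c) + d^2) + (2*c+1)*d) *
          (((2*c*(v k - c) + d^2) - ((2*c+1)*d)/2)^2 + 3*((2*c+1)*d)^2/4) :=
        mul_nonneg (by linarith [hX])
          (by nlinarith [sq_nonneg ((2*c*(v k - c) + d^2) - ((2*c+1)*d)/2),
            sq_nonneg ((2*c+1)*d)])
      nlinarith [key]
    have g3 := (abs_le.mp hTb).2
    have g4 : (12*c^3 + (2*c+1)^3 + 2*L + 1)*d*d^2 < c^4*d^2 := by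
      have h' : (12*c^3 + (2*c+1)^3 + 2*L + 1)*d < c^4 := by
        rw [lt_div_iff₀ hCC0] at hd2
        linarith [hd2]
      exact mul_lt_mul_of_pos_right h' (pow_pos hd0 2)
    have g5 : 0 ≤ 3*c^2*d^4 :=
      mul_nonneg (mul_nonneg (by norm_num) (sq_nonneg c)) (pow_nonneg hd0.le 4)
    have g6 : 0 ≤ 6*c^4*(v k - c)^2 :=
      mul_nonneg (mul_nonneg (by norm_num) (pow_nonneg hc.le 4)) (sq_nonneg _)
    have g7 : 0 < c^4*d^2 := mul_pos (pow_pos hc 4) (pow_pos hd0 2)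
    have g8 : 0 ≤ d^3 := pow_nonneg hd0.le 3
    linarith [g1, g2, g3, g4, g5, g6, g7, g8, hc3]
end

section
/- Let u₁★,…,u_r★ ∈ ℝ^n be scaled factors with pairwise incoherence μ★ = max_{i≠j} |⟨u_i★, u_j★⟩|, U★ = [u₁★ … u_r★], and let H = [h₁ … h_r] ∈ ℝ^{n×r}. Then |∑_{i≠j} ⟨u_i★,u_j★⟩ ⟨h_i,u_j★⟩ ⟨u_i★,h_j⟩| ≤ μ★ ‖U★‖² ‖H‖_F², where ‖U★‖ is the spectral norm. -/
open Matrix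

/-- The ℓ²→ℓ² operator (spectral) norm of a real matrix. -/
noncomputable def opNorm {m n : Type*} [Fintype m] [Fintype n] [DecidableEq n]
    (A : Matrix m n ℝ) : ℝ :=
  ‖LinearMap.toContinuousLinearMap (Matrix.toEuclideanLin (𝕜 := ℝ) A)‖

lemma opNorm_transpose_mulVec_sq_le {n r : ℕ} (A : Matrix (Fin n) (Fin r) ℝ)
    (x : Fin n → ℝ) :
    ∑ i, (∑ k, A k i * x k) ^ 2 ≤ opNorm A ^ 2 * ∑ k, (x k) ^ 2 := by
  have key : opNorm Aᵀ = opNorm A := by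
    unfold opNorm
    have h1 : Aᵀ = Aᴴ := by ext i j; simp [conjTranspose]
    rw [h1, Matrix.toEuclideanLin_conjTranspose_eq_adjoint,
      LinearMap.adjoint_toContinuousLinearMap]
    exact ContinuousLinearMap.adjoint.norm_map _
  set T := LinearMap.toContinuousLinearMap (Matrix.toEuclideanLin (𝕜 := ℝ) Aᵀ)
  set v : EuclideanSpace ℝ (Fin n) := (WithLp.equiv 2 _).symm x
  have hb : ‖T v‖ ≤ opNorm A * ‖v‖ := by
    rw [← key]; exact T.le_opNorm v
  have hTv : ∀ i, T v i = ∑ k, A k i * x k := by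
    intro i
    show Matrix.toEuclideanLin (𝕜 := ℝ) Aᵀ v i = _
    simp [Matrix.toEuclideanLin_apply, Matrix.mulVec, dotProduct, v, transpose]
  have h1 : ‖T v‖ ^ 2 = ∑ i, (∑ k, A k i * x k) ^ 2 := by
    rw [EuclideanSpace.norm_eq, Real.sq_sqrt (by positivity)]
    exact Finset.sum_congr rfl fun i _ => by rw [hTv i, Real.norm_eq_abs, sq_abs]
  have h2 : ‖v‖ ^ 2 = ∑ k, (x k) ^ 2 := by
    rw [EuclideanSpace.norm_eq, Real.sq_sqrt (by positivity)]
    exact Finset.sum_congr rfl fun k _ => by rw [Real.norm_eq_abs, sq_abs]; rfl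
  calc ∑ i, (∑ k, A k i * x k) ^ 2 = ‖T v‖ ^ 2 := h1.symm
    _ ≤ (opNorm A * ‖v‖) ^ 2 := by
        apply sq_le_sq' _ hb
        nlinarith [norm_nonneg (T v)]
    _ = opNorm A ^ 2 * ∑ k, (x k) ^ 2 := by rw [mul_pow, h2]


/-- With `μ★ = max_{i≠j} |⟨u_i★, u_j★⟩|` (columns `u_i★` of `U★`) and `H` with
columns `h_i`, `|∑_{i≠j} ⟨u_i★,u_j★⟩⟨h_i,u_j★⟩⟨u_i★,h_j⟩| ≤ μ★ ‖U★‖² ‖H‖_F²`. -/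
theorem offdiag_triple_sum_bound {n r : ℕ}
    (Ustar H : Matrix (Fin n) (Fin r) ℝ) (μ : ℝ)
    (hμ : IsGreatest {c | ∃ i j : Fin r, i ≠ j ∧
      c = |∑ k, Ustar k i * Ustar k j|} μ) :
    |∑ p ∈ (Finset.univ : Finset (Fin r)).offDiag,
        (∑ k, Ustar k p.1 * Ustar k p.2) * (∑ k, H k p.1 * Ustar k p.2) *
          (∑ k, Ustar k p.1 * H k p.2)| ≤
      μ * opNorm Ustar ^ 2 * (∑ i, ∑ j, (H i j) ^ 2) := by
  obtain ⟨⟨i0, j0, hij0, hμeq⟩, hub⟩ := hμ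
  have hμ0 : 0 ≤ μ := hμeq ▸ abs_nonneg _
  set g : Fin r → Fin r → ℝ := fun i j => ∑ k, Ustar k i * H k j with hg
  -- pointwise bound
  have step1 : |∑ p ∈ (Finset.univ : Finset (Fin r)).offDiag,
        (∑ k, Ustar k p.1 * Ustar k p.2) * (∑ k, H k p.1 * Ustar k p.2) *
          (∑ k, Ustar k p.1 * H k p.2)| ≤
      ∑ p ∈ (Finset.univ : Finset (Fin r)).offDiag,
        μ * ((g p.1 p.2) ^ 2 + (g p.2 p.1) ^ 2) / 2 := by
    refine (Finset.abs_sum_le_sum_abs _ _).trans (Finset.sum_le_sum ?_)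
    rintro ⟨i, j⟩ hp
    simp only [Finset.mem_offDiag] at hp
    have hc : |∑ k, Ustar k i * Ustar k j| ≤ μ := hub ⟨i, j, hp.2.2, rfl⟩
    have hgji : (∑ k, H k i * Ustar k j) = g j i := by
      simp [hg, mul_comm]
    have hgij : (∑ k, Ustar k i * H k j) = g i j := rfl
    rw [abs_mul, abs_mul, hgji, hgij]
    have hAM : |g j i| * |g i j| ≤ ((g i j) ^ 2 + (g j i) ^ 2) / 2 := by
      nlinarith [sq_nonneg (|g j i| - |g i j|), sq_abs (g i j), sq_abs (g j i)]
    have h0 : 0 ≤ |g j i| * |g i j| := by positivity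
    calc |∑ k, Ustar k i * Ustar k j| * |g j i| * |g i j|
        ≤ μ * (|g j i| * |g i j|) := by rw [mul_assoc]; exact mul_le_mul_of_nonneg_right hc h0
      _ ≤ μ * (((g i j) ^ 2 + (g j i) ^ 2) / 2) := mul_le_mul_of_nonneg_left hAM hμ0
      _ = μ * ((g i j) ^ 2 + (g j i) ^ 2) / 2 := by ring
  -- symmetry: sum over offDiag of (a+b)/2 form equals sum of g^2
  have step2 : ∑ p ∈ (Finset.univ : Finset (Fin r)).offDiag,
        μ * ((g p.1 p.2) ^ 2 + (g p.2 p.1) ^ 2) / 2 ≤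
      μ * ∑ j, ∑ i, (g i j) ^ 2 := by
    have hswap : ∑ p ∈ (Finset.univ : Finset (Fin r)).offDiag, (g p.2 p.1) ^ 2
        = ∑ p ∈ (Finset.univ : Finset (Fin r)).offDiag, (g p.1 p.2) ^ 2 := by
      apply Finset.sum_nbij' (fun p => (p.2, p.1)) (fun p => (p.2, p.1)) <;>
        simp [Finset.mem_offDiag, eq_comm, and_comm]
    have : ∑ p ∈ (Finset.univ : Finset (Fin r)).offDiag,
        μ * ((g p.1 p.2) ^ 2 + (g p.2 p.1) ^ 2) / 2
        = μ * ∑ p ∈ (Finset.univ : Finset (Fin r)).offDiag, (g p.1 p.2) ^ 2 := by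
      rw [← Finset.sum_div, ← Finset.mul_sum, Finset.sum_add_distrib, hswap]
      ring
    rw [this]
    apply mul_le_mul_of_nonneg_left _ hμ0
    have : ∑ j, ∑ i, (g i j) ^ 2
        = ∑ p ∈ (Finset.univ : Finset (Fin r)) ×ˢ Finset.univ, (g p.2 p.1) ^ 2 := by
      rw [Finset.sum_product]
    have h2 : ∑ p ∈ (Finset.univ : Finset (Fin r)) ×ˢ Finset.univ, (g p.2 p.1) ^ 2
        = ∑ p ∈ (Finset.univ : Finset (Fin r)) ×ˢ Finset.univ, (g p.1 p.2) ^ 2 := by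
      apply Finset.sum_nbij' (fun p => (p.2, p.1)) (fun p => (p.2, p.1)) <;> simp
    rw [this, h2]
    exact Finset.sum_le_sum_of_subset_of_nonneg
      (fun p hp => Finset.mem_product.2 ⟨Finset.mem_univ _, Finset.mem_univ _⟩)
      (fun _ _ _ => sq_nonneg _)
  -- spectral norm bound
  have step3 : ∑ j, ∑ i, (g i j) ^ 2 ≤ opNorm Ustar ^ 2 * ∑ i, ∑ j, (H i j) ^ 2 := by
    have : ∀ j, ∑ i, (g i j) ^ 2 ≤ opNorm Ustar ^ 2 * ∑ k, (H k j) ^ 2 := fun j =>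
      opNorm_transpose_mulVec_sq_le Ustar (fun k => H k j)
    calc ∑ j, ∑ i, (g i j) ^ 2 ≤ ∑ j, opNorm Ustar ^ 2 * ∑ k, (H k j) ^ 2 :=
          Finset.sum_le_sum fun j _ => this j
      _ = opNorm Ustar ^ 2 * ∑ i, ∑ j, (H i j) ^ 2 := by
          rw [← Finset.mul_sum, Finset.sum_comm]
  calc _ ≤ μ * ∑ j, ∑ i, (g i j) ^ 2 := step1.trans step2
    _ ≤ μ * (opNorm Ustar ^ 2 * ∑ i, ∑ j, (H i j) ^ 2) :=
        mul_le_mul_of_nonneg_left step3 hμ0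
    _ = μ * opNorm Ustar ^ 2 * (∑ i, ∑ j, (H i j) ^ 2) := by ring
end
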